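/- Let n ≥ 3 be an integer, κ1, κ2, κ3, κ₋₁, κ₋ ≥ 0, and let (p, q, r) be a differentiable solution of the ODE system with r(t) > 0 on some interval. Set s := n r − p − 2 q. Then on that interval s' = (n−1) κ2 p + κ₋₁ p + κ₋ q · 2(q − r)/((n−2) r) − s (κ3 p + κ1 + κ₋ q (n−1)/((n−2) r)) and (q − r)' = κ3 p s − (2 κ₋ q / ((n−2) r)) (q − r). -/

import Mathlib

/-- The right-hand side of the `p`-equation. -/
noncomputable def Fp (n : ℕ) (k1 k2 k3 km1 km p q r : ℝ) : ℝ :=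
  (k1 - k3 * p) * (n * r - p - 2 * q)
    + km * q * (1 - (n - 1) * p / ((n - 2) * r)) - (k2 + km1) * p

/-- The right-hand side of the `q`-equation. -/
noncomputable def Fq (n : ℕ) (k1 k2 k3 km1 km p q r : ℝ) : ℝ :=
  k2 * p + k3 * p * (n * r - p - 2 * q) - km * q

/-- The right-hand side of the `r`-equation. -/
noncomputable def Fr (n : ℕ) (k1 k2 k3 km1 km p q r : ℝ) : ℝ :=
  k2 * p - km * q * ((n * r - 2 * q) / ((n - 2) * r))

section VectorField

variable {n : ℕ} (k1 k2 k3 km1 km p q r : ℝ)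

theorem nFr_sub_Fp_sub_two_Fq (hn : (n : ℝ) - 2 ≠ 0) (hr : r ≠ 0) :
    n * Fr n k1 k2 k3 km1 km p q r - Fp n k1 k2 k3 km1 km p q r
        - 2 * Fq n k1 k2 k3 km1 km p q r =
      ((n : ℝ) - 1) * k2 * p + km1 * p + km * q * (2 * (q - r) / (((n : ℝ) - 2) * r))
        - ((n : ℝ) * r - p - 2 * q) * (k3 * p + k1 + km * q * ((n : ℝ) - 1) / (((n : ℝ) - 2) * r)) := by
  simp only [Fp, Fq, Fr]
  field_simp
  ring

theorem Fq_sub_Fr (hn : (n : ℝ) - 2 ≠ 0) (hr : r ≠ 0) :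
    Fq n k1 k2 k3 km1 km p q r - Fr n k1 k2 k3 km1 km p q r =
      k3 * p * ((n : ℝ) * r - p - 2 * q) - 2 * km * q / (((n : ℝ) - 2) * r) * (q - r) := by
  simp only [Fq, Fr]
  field_simp
  ring

end VectorField

theorem stmt_4_general (n : ℕ) (hn : 3 ≤ n) (k1 k2 k3 km1 km : ℝ)
    (I : Set ℝ) (p q r : ℝ → ℝ)
    (hr : ∀ t ∈ I, 0 < r t)
    (hode : ∀ t ∈ I,
      HasDerivAt p (Fp n k1 k2 k3 km1 km (p t) (q t) (r t)) t ∧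
      HasDerivAt q (Fq n k1 k2 k3 km1 km (p t) (q t) (r t)) t ∧
      HasDerivAt r (Fr n k1 k2 k3 km1 km (p t) (q t) (r t)) t) :
    ∀ t ∈ I,
      HasDerivAt (fun u => (n : ℝ) * r u - p u - 2 * q u)
        (((n : ℝ) - 1) * k2 * p t + km1 * p t
          + km * q t * (2 * (q t - r t) / (((n : ℝ) - 2) * r t))
          - ((n : ℝ) * r t - p t - 2 * q t) *
              (k3 * p t + k1 + km * q t * ((n : ℝ) - 1) / (((n : ℝ) - 2) * r t))) t ∧
      HasDerivAt (fun u => q u - r u)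
        (k3 * p t * ((n : ℝ) * r t - p t - 2 * q t)
          - 2 * km * q t / (((n : ℝ) - 2) * r t) * (q t - r t)) t := by
  intro t ht
  obtain ⟨hp, hq, hr'⟩ := hode t ht
  have hrt : r t ≠ 0 := (hr t ht).ne'
  have hn2 : (n : ℝ) - 2 ≠ 0 := by
    have : (3 : ℝ) ≤ n := by exact_mod_cast hn
    linarith
  exact ⟨(((hr'.const_mul (n : ℝ)).sub hp).sub (hq.const_mul 2)).congr_deriv
      (nFr_sub_Fp_sub_two_Fq _ _ _ _ _ _ _ _ hn2 hrt),
    (hq.sub hr').congr_deriv (Fq_sub_Fr _ _ _ _ _ _ _ _ hn2 hrt)⟩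

/-- The equations satisfied by `s = n r - p - 2 q` and by `q - r` along solutions. -/
theorem stmt_4 (n : ℕ) (hn : 3 ≤ n) (k1 k2 k3 km1 km : ℝ)
    (hk1 : 0 ≤ k1) (hk2 : 0 ≤ k2) (hk3 : 0 ≤ k3) (hkm1 : 0 ≤ km1) (hkm : 0 ≤ km)
    (I : Set ℝ) (p q r : ℝ → ℝ)
    (hr : ∀ t ∈ I, 0 < r t)
    (hode : ∀ t ∈ I,
      HasDerivAt p (Fp n k1 k2 k3 km1 km (p t) (q t) (r t)) t ∧
      HasDerivAt q (Fq n k1 k2 k3 km1 km (p t) (q t) (r t)) t ∧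
      HasDerivAt r (Fr n k1 k2 k3 km1 km (p t) (q t) (r t)) t) :
    ∀ t ∈ I,
      HasDerivAt (fun u => (n : ℝ) * r u - p u - 2 * q u)
        (((n : ℝ) - 1) * k2 * p t + km1 * p t
          + km * q t * (2 * (q t - r t) / (((n : ℝ) - 2) * r t))
          - ((n : ℝ) * r t - p t - 2 * q t) *
              (k3 * p t + k1 + km * q t * ((n : ℝ) - 1) / (((n : ℝ) - 2) * r t))) t ∧
      HasDerivAt (fun u => q u - r u)
        (k3 * p t * ((n : ℝ) * r t - p t - 2 * q t)
          - 2 * km * q t / (((n : ℝ) - 2) * r t) * (q t - r t)) t :=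
  stmt_4_general n hn k1 k2 k3 km1 km I p q r hr hode
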